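/- arXiv:1802.09098 — 2 statements merged into one kernel-verified Lean document; each statement's English description precedes it below -/
import Mathlib

section
/- If the null p-values are independent of each other and of the non-null p-values, each null p-value is super-uniform (P(P_j ≤ u) ≤ u for all u ∈ [0,1]), and both sequences {α_t} and {λ_t} are monotone, then for all t ∈ ℕ the expected SAFFRON estimate dominates the FDR: E[FDP̂_λ(t)] ≥ E[FDP(t)] = FDR(t). (Theorem 1(c)) -/
open MeasureTheory ProbabilityTheory

/-- The rejection-and-candidacy indicator history available just before testing hypothesis `t`:
the pair of indicators `R_j = 1{P_j ≤ α_j}` and `C_j = 1{P_j ≤ λ_j}` for `j < t`,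
encoded as a pair of boolean sequences. -/
noncomputable def history {Ω : Type*} (P alpha lam : ℕ → Ω → ℝ) (t : ℕ) (ω : Ω) :
    (ℕ → Bool) × (ℕ → Bool) :=
  (fun j => decide (j < t ∧ P j ω ≤ alpha j ω), fun j => decide (j < t ∧ P j ω ≤ lam j ω))

/-- The number of rejections `|R(t)|` among the hypotheses indexed `j ≤ t`. -/
noncomputable def numRejections {Ω : Type*} (P alpha : ℕ → Ω → ℝ) (t : ℕ) (ω : Ω) : ℝ :=
  ∑ j ∈ Finset.Iic t, if P j ω ≤ alpha j ω then (1 : ℝ) else 0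

open Classical in
/-- The number of false rejections `|H⁰ ∩ R(t)|` among the hypotheses indexed `j ≤ t`. -/
noncomputable def numFalseRejections {Ω : Type*} (H0 : Set ℕ) (P alpha : ℕ → Ω → ℝ)
    (t : ℕ) (ω : Ω) : ℝ :=
  ∑ j ∈ Finset.Iic t, if j ∈ H0 ∧ P j ω ≤ alpha j ω then (1 : ℝ) else 0

/-- The false discovery proportion `FDP(t) = |H⁰ ∩ R(t)| / max(|R(t)|, 1)`. -/
noncomputable def FDP {Ω : Type*} (H0 : Set ℕ) (P alpha : ℕ → Ω → ℝ) (t : ℕ) (ω : Ω) : ℝ :=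
  numFalseRejections H0 P alpha t ω / max (numRejections P alpha t ω) 1

/-- The SAFFRON FDP estimate
`FDP̂_λ(t) = (Σ_{j ≤ t} α_j · 1{P_j > λ_j}/(1 − λ_j)) / max(|R(t)|, 1)`. -/
noncomputable def FDPhatSaffron {Ω : Type*} (P alpha lam : ℕ → Ω → ℝ) (t : ℕ) (ω : Ω) : ℝ :=
  (∑ j ∈ Finset.Iic t, alpha j ω * (if lam j ω < P j ω then (1 : ℝ) else 0) / (1 - lam j ω))
    / max (numRejections P alpha t ω) 1

/-- The null p-values `{P_j : j ∈ H⁰}` are independent of each other and of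
the non-null p-values: the family of σ-algebras consisting of `σ(P_j)` for each null `j`,
together with the σ-algebra generated by all non-null p-values, is independent. -/
def nullsIndep {Ω : Type*} [MeasurableSpace Ω] (μ : Measure Ω) (H0 : Set ℕ)
    (P : ℕ → Ω → ℝ) : Prop :=
  ProbabilityTheory.iIndep
    (fun i : Option {j : ℕ // j ∈ H0} =>
      i.elim (⨆ j ∈ H0ᶜ, MeasurableSpace.comap (P j) inferInstance)
        (fun j => MeasurableSpace.comap (P j.1) inferInstance)) μ

/-!
Split both sides into the terms of the indices `j ≤ t`. For a null `j`, rerun the procedure on the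
p-values with `P j` replaced by `1`. By monotonicity of the rules this can only lower the rejection
count, and it changes nothing when `P j > λ_j`. In the rerun, `α_j`, `λ_j` and the rejection count
are functions of finitely many indicators of the other p-values, hence independent of `P j`;
conditionally on them, super-uniformity gives
`P(P_j ≤ α_j) ≤ α_j ≤ α_j P(P_j > λ_j) / (1 - λ_j)`.
-/

abbrev Hist := (ℕ → Bool) × (ℕ → Bool)

/-- The deterministic counterpart of `history`: the run of the rules `f, g` on an arbitrary
sequence of p-values `q`, so that single p-values can be replaced. -/
noncomputable def runHistory (f g : ℕ → Hist → ℝ) : ℕ → (ℕ → ℝ) → Hist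
  | s, q =>
    (fun i => if _ : i < s then decide (q i ≤ f i (runHistory f g i q)) else false,
     fun i => if _ : i < s then decide (q i ≤ g i (runHistory f g i q)) else false)
termination_by s => s

def restrictHist (s : ℕ) (b : Hist) : (Fin s → Bool) × (Fin s → Bool) :=
  (fun i => b.1 i, fun i => b.2 i)

def extendHist (s : ℕ) (v : (Fin s → Bool) × (Fin s → Bool)) : Hist :=
  (fun i => if h : i < s then v.1 ⟨i, h⟩ else false,
   fun i => if h : i < s then v.2 ⟨i, h⟩ else false)

theorem measurable_decide_le {Ω : Type*} {m : MeasurableSpace Ω} {u v : Ω → ℝ}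
    (hu : Measurable u) (hv : Measurable v) : Measurable fun ω => decide (u ω ≤ v ω) :=
  measurable_to_bool <| by convert measurableSet_le hu hv using 1; ext; simp

namespace runHistory

variable (f g : ℕ → Hist → ℝ)

theorem fst_apply (s : ℕ) (q : ℕ → ℝ) (i : ℕ) :
    (runHistory f g s q).1 i = decide (i < s ∧ q i ≤ f i (runHistory f g i q)) := by
  rw [runHistory]; by_cases h : i < s <;> simp [h]

theorem snd_apply (s : ℕ) (q : ℕ → ℝ) (i : ℕ) :
    (runHistory f g s q).2 i = decide (i < s ∧ q i ≤ g i (runHistory f g i q)) := by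
  rw [runHistory]; by_cases h : i < s <;> simp [h]

theorem congr_of_eqOn {s : ℕ} {q q' : ℕ → ℝ} (h : ∀ i < s, q i = q' i) :
    runHistory f g s q = runHistory f g s q' := by
  induction s using Nat.strong_induction_on with
  | _ s ih =>
    have hrun : ∀ i < s, runHistory f g i q = runHistory f g i q' :=
      fun i hi => ih i hi fun k hk => h k (hk.trans hi)
    ext i <;> simp only [fst_apply, snd_apply] <;> by_cases hi : i < s <;>
      simp [hi, h i, hrun i]

theorem antitone (hf : ∀ t, Monotone (f t)) (hg : ∀ t, Monotone (g t)) (s : ℕ)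
    {q q' : ℕ → ℝ} (hq : q ≤ q') : runHistory f g s q' ≤ runHistory f g s q := by
  induction s using Nat.strong_induction_on with
  | _ s ih =>
    refine ⟨fun i => ?_, fun i => ?_⟩ <;>
      simp only [fst_apply, snd_apply, Bool.le_iff_imp, decide_eq_true_eq]
    · exact fun ⟨hi, hle⟩ => ⟨hi, (hq i).trans (hle.trans (hf i (ih i hi)))⟩
    · exact fun ⟨hi, hle⟩ => ⟨hi, (hq i).trans (hle.trans (hg i (ih i hi)))⟩

theorem update_of_le {s j : ℕ} (hs : s ≤ j) (q : ℕ → ℝ) (c : ℝ) :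
    runHistory f g s (Function.update q j c) = runHistory f g s q :=
  congr_of_eqOn f g fun _ hi => Function.update_of_ne (hi.trans_le hs).ne _ _

theorem update_le (hf : ∀ t, Monotone (f t)) (hg : ∀ t, Monotone (g t)) {j : ℕ}
    {q : ℕ → ℝ} {c : ℝ} (hc : q j ≤ c) (s : ℕ) :
    runHistory f g s (Function.update q j c) ≤ runHistory f g s q := by
  refine antitone f g hf hg s fun i => ?_
  rcases eq_or_ne i j with rfl | hij
  · simpa using hc
  · simp [Function.update_of_ne hij]

theorem update_eq {j : ℕ} {q : ℕ → ℝ} {c : ℝ}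
    (hf : c ≤ f j (runHistory f g j q) ↔ q j ≤ f j (runHistory f g j q))
    (hg : c ≤ g j (runHistory f g j q) ↔ q j ≤ g j (runHistory f g j q)) (s : ℕ) :
    runHistory f g s (Function.update q j c) = runHistory f g s q := by
  induction s using Nat.strong_induction_on with
  | _ s ih =>
    have hj := update_of_le f g (le_refl j) q c
    ext i <;> simp only [fst_apply, snd_apply] <;> rcases eq_or_ne i j with rfl | hij
    · simp [hj, hf]
    · by_cases hi : i < s <;> simp [hi, Function.update_of_ne hij, ih i]
    · simp [hj, hg]
    · by_cases hi : i < s <;> simp [hi, Function.update_of_ne hij, ih i]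

theorem eq_history {Ω : Type*} {P alpha lam : ℕ → Ω → ℝ}
    (hpreda : ∀ t ω, alpha t ω = f t (history P alpha lam t ω))
    (hpredl : ∀ t ω, lam t ω = g t (history P alpha lam t ω)) (s : ℕ) (ω : Ω) :
    runHistory f g s (P · ω) = history P alpha lam s ω := by
  induction s using Nat.strong_induction_on with
  | _ s ih =>
    ext i <;> simp only [fst_apply, snd_apply, history] <;> by_cases hi : i < s
    · simp [hi, ih i hi, ← hpreda]
    · simp [hi]
    · simp [hi, ih i hi, ← hpredl]
    · simp [hi]

theorem extendHist_restrictHist (s : ℕ) (q : ℕ → ℝ) :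
    extendHist s (restrictHist s (runHistory f g s q)) = runHistory f g s q := by
  ext i <;> by_cases hi : i < s <;> simp [extendHist, restrictHist, hi, fst_apply, snd_apply]

theorem measurable_restrictHist {Ω : Type*} {m : MeasurableSpace Ω} {Q : ℕ → Ω → ℝ}
    (hQ : ∀ i, Measurable (Q i)) (s : ℕ) :
    Measurable fun ω => restrictHist s (runHistory f g s (Q · ω)) := by
  induction s using Nat.strong_induction_on with
  | _ s ih =>
    have hF : ∀ i < s, ∀ F : Hist → ℝ, Measurable fun ω => F (runHistory f g i (Q · ω)) :=
      fun i hi F => by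
        simpa only [Function.comp_def, extendHist_restrictHist] using
          (Measurable.of_discrete (f := F ∘ extendHist i)).comp (ih i hi)
    refine (measurable_pi_iff.2 fun i => ?_).prodMk (measurable_pi_iff.2 fun i => ?_) <;>
      simp only [fst_apply, snd_apply, i.isLt, true_and]
    · exact measurable_decide_le (hQ i) (hF i i.isLt (f i))
    · exact measurable_decide_le (hQ i) (hF i i.isLt (g i))

theorem measurable_comp {Ω β : Type*} {m : MeasurableSpace Ω} [MeasurableSpace β]
    {Q : ℕ → Ω → ℝ} (hQ : ∀ i, Measurable (Q i)) (F : Hist → β) (s : ℕ) :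
    Measurable fun ω => F (runHistory f g s (Q · ω)) := by
  simpa only [Function.comp_def, extendHist_restrictHist] using
    (Measurable.of_discrete (f := F ∘ extendHist s)).comp (measurable_restrictHist f g hQ s)

theorem exists_abs_le (F : Hist → ℝ) (s : ℕ) : ∃ C, ∀ q, |F (runHistory f g s q)| ≤ C := by
  obtain ⟨C, hC⟩ := (Set.finite_range fun v => |F (extendHist s v)|).bddAbove
  refine ⟨C, fun q => ?_⟩
  simpa [extendHist_restrictHist] using hC ⟨restrictHist s (runHistory f g s q), rfl⟩

end runHistory

def rejCount (t : ℕ) (b : Hist) : ℝ :=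
  ∑ i ∈ Finset.Iic t, if b.1 i then 1 else 0

theorem rejCount_mono (t : ℕ) : Monotone (rejCount t) := fun b b' h =>
  Finset.sum_le_sum fun i _ => by
    have := h.1 i
    cases hb : b.1 i <;> cases hb' : b'.1 i <;> simp_all [Bool.le_iff_imp]

theorem numRejections_eq_rejCount_history {Ω : Type*} (P alpha lam : ℕ → Ω → ℝ) (t : ℕ)
    (ω : Ω) : numRejections P alpha t ω = rejCount t (history P alpha lam (t + 1) ω) :=
  Finset.sum_congr rfl fun i hi => by
    simp [history, Finset.mem_Iic.1 hi]

def IsSuperUniform {Ω : Type*} [MeasurableSpace Ω] (μ : Measure Ω) (X : Ω → ℝ) : Prop :=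
  ∀ u ∈ Set.Icc (0 : ℝ) 1, μ {ω | X ω ≤ u} ≤ ENNReal.ofReal u

namespace IsSuperUniform

variable {Ω : Type*} [MeasurableSpace Ω] {μ : Measure Ω} {X : Ω → ℝ}

theorem measureReal_le (hX : IsSuperUniform μ X) {u : ℝ} (hu : u ∈ Set.Icc (0 : ℝ) 1) :
    μ.real {ω | X ω ≤ u} ≤ u :=
  ENNReal.toReal_le_of_le_ofReal hu.1 (hX u hu)

theorem one_sub_le_measureReal_lt [IsProbabilityMeasure μ] (hX : IsSuperUniform μ X)
    (hXm : Measurable X) {u : ℝ} (hu : u ∈ Set.Icc (0 : ℝ) 1) : 1 - u ≤ μ.real {ω | u < X ω} := by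
  have hcompl : {ω | u < X ω} = {ω | X ω ≤ u}ᶜ := by ext; simp
  rw [hcompl, probReal_compl_eq_one_sub (measurableSet_le hXm measurable_const)]
  linarith [hX.measureReal_le hu]

theorem measureReal_le_mul_div [IsProbabilityMeasure μ] (hX : IsSuperUniform μ X)
    (hXm : Measurable X) {a l : ℝ} (ha : a ∈ Set.Icc (0 : ℝ) 1) (hl : l ∈ Set.Ico (0 : ℝ) 1) :
    μ.real {ω | X ω ≤ a} ≤ μ.real {ω | l < X ω} * (a / (1 - l)) := by
  have h1l : 0 < 1 - l := sub_pos.2 hl.2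
  calc μ.real {ω | X ω ≤ a} ≤ a := hX.measureReal_le ha
    _ = (1 - l) * (a / (1 - l)) := by field_simp
    _ ≤ μ.real {ω | l < X ω} * (a / (1 - l)) := by
      gcongr
      · exact div_nonneg ha.1 h1l.le
      · exact hX.one_sub_le_measureReal_lt hXm (Set.Ico_subset_Icc_self hl)

end IsSuperUniform

section FiniteConditioning

variable {Ω V : Type*} [MeasurableSpace Ω] {μ : Measure Ω} [Fintype V] [MeasurableSpace V]
  [MeasurableSingletonClass V] {X : Ω → ℝ} {D : Ω → V}

theorem integral_ite_eq_sum [IsFiniteMeasure μ] (hX : Measurable X) (hD : Measurable D)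
    (hXD : IndepFun X D μ) {p : V → ℝ → Prop} [∀ v, DecidablePred (p v)]
    (hp : ∀ v, MeasurableSet {x | p v x}) (c : V → ℝ) :
    ∫ ω, (if p (D ω) (X ω) then c (D ω) else 0) ∂μ
      = ∑ v, μ.real {ω | p v (X ω)} * μ.real (D ⁻¹' {v}) * c v := by
  have hmeas : ∀ v, MeasurableSet ({ω | p v (X ω)} ∩ D ⁻¹' {v}) :=
    fun v => (hX (hp v)).inter (hD (measurableSet_singleton v))
  have hsum : ∀ ω, (if p (D ω) (X ω) then c (D ω) else 0)
      = ∑ v, ({ω | p v (X ω)} ∩ D ⁻¹' {v}).indicator (fun _ => c v) ω := by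
    intro ω
    rw [Finset.sum_eq_single (D ω)
      (fun v _ hv => Set.indicator_of_notMem (fun h => hv h.2.symm) _) (by simp)]
    by_cases h : p (D ω) (X ω) <;> simp [h]
  simp_rw [hsum]
  rw [integral_finsetSum _ fun v _ => (integrable_const _).indicator (hmeas v)]
  refine Finset.sum_congr rfl fun v _ => ?_
  have hindep := hXD.measure_inter_preimage_eq_mul _ _ (hp v) (measurableSet_singleton v)
  rw [Set.preimage_ofPred_eq] at hindep
  rw [integral_indicator_const _ (hmeas v), smul_eq_mul, measureReal_def, hindep,
    ENNReal.toReal_mul, measureReal_def, measureReal_def]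

theorem IsSuperUniform.integral_le_integral_saffron [IsProbabilityMeasure μ]
    (hsu : IsSuperUniform μ X) (hX : Measurable X) (hD : Measurable D) (hXD : IndepFun X D μ)
    {a l n : V → ℝ} (ha : ∀ ω, a (D ω) ∈ Set.Icc (0 : ℝ) 1)
    (hl : ∀ ω, l (D ω) ∈ Set.Ico (0 : ℝ) 1) (hn : ∀ v, 0 ≤ n v) :
    ∫ ω, (if X ω ≤ a (D ω) then 1 else 0) / n (D ω) ∂μ
      ≤ ∫ ω, a (D ω) * (if l (D ω) < X ω then 1 else 0) / (1 - l (D ω)) / n (D ω) ∂μ := by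
  have hlhs := integral_ite_eq_sum hX hD hXD (p := fun v x => x ≤ a v)
    (fun _ => measurableSet_Iic) (fun v => 1 / n v)
  have hrhs := integral_ite_eq_sum hX hD hXD (p := fun v x => l v < x)
    (fun _ => measurableSet_Ioi) (fun v => a v / (1 - l v) / n v)
  simp only [ite_div, zero_div, mul_ite, mul_one, mul_zero, hlhs, hrhs]
  refine Finset.sum_le_sum fun v _ => ?_
  rcases (D ⁻¹' {v}).eq_empty_or_nonempty with hv | ⟨ω, rfl⟩
  · simp [hv]
  calc μ.real {ω' | X ω' ≤ a (D ω)} * μ.real (D ⁻¹' {D ω}) * (1 / n (D ω))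
      ≤ μ.real {ω' | l (D ω) < X ω'} * (a (D ω) / (1 - l (D ω)))
          * μ.real (D ⁻¹' {D ω}) * (1 / n (D ω)) := by
        gcongr
        · exact div_nonneg zero_le_one (hn _)
        · exact hsu.measureReal_le_mul_div hX (ha ω) (hl ω)
    _ = _ := by ring

end FiniteConditioning

theorem nullsIndep.indep_iSup_ne {Ω : Type*} [m0 : MeasurableSpace Ω] {μ : Measure Ω}
    {H0 : Set ℕ} {P : ℕ → Ω → ℝ} (h : nullsIndep μ H0 P) (hP : ∀ i, Measurable (P i))
    {j : ℕ} (hj : j ∈ H0) :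
    Indep (MeasurableSpace.comap (P j) inferInstance)
      (⨆ i, ⨆ (_ : i ≠ j), MeasurableSpace.comap (P i) inferInstance) μ := by
  set m : Option {k // k ∈ H0} → MeasurableSpace Ω := fun i =>
    i.elim (⨆ k ∈ H0ᶜ, MeasurableSpace.comap (P k) inferInstance)
      (fun k => MeasurableSpace.comap (P k.1) inferInstance)
  have hle : ∀ i, m i ≤ m0 := by
    rintro (_ | k)
    · exact iSup₂_le fun k _ => (hP k).comap_le
    · exact (hP k).comap_le
  have hind := indep_iSup_of_disjoint hle h (disjoint_compl_right (a := {some ⟨j, hj⟩}))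
  rw [iSup_singleton] at hind
  refine indep_of_indep_of_le_right hind (iSup₂_le fun i hij => ?_)
  by_cases hi : i ∈ H0
  · exact le_biSup m (show some ⟨i, hi⟩ ∈ ({some ⟨j, hj⟩}ᶜ : Set _) by simpa using hij)
  · exact (le_biSup (fun k => MeasurableSpace.comap (P k) inferInstance) hi).trans
      (le_biSup m (show none ∈ ({some ⟨j, hj⟩}ᶜ : Set _) by simp))

theorem measurable_update_apply_iSup_ne {Ω : Type*} (P : ℕ → Ω → ℝ) (j : ℕ) (c : ℝ) (i : ℕ) :
    Measurable[⨆ i, ⨆ (_ : i ≠ j), MeasurableSpace.comap (P i) inferInstance]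
      fun ω => Function.update (P · ω) j c i := by
  rcases eq_or_ne i j with rfl | hij
  · simp
  · simpa [Function.update_of_ne hij] using
      Measurable.of_comap_le (le_iSup₂ (f := fun i (_ : i ≠ j) =>
        MeasurableSpace.comap (P i) inferInstance) i hij)

theorem integrable_div_max_one {Ω : Type*} [MeasurableSpace Ω] {μ : Measure Ω}
    [IsFiniteMeasure μ] {u R : Ω → ℝ} (hu : Measurable u) (hR : Measurable R) {C : ℝ}
    (huC : ∀ ω, |u ω| ≤ C) : Integrable (fun ω => u ω / max (R ω) 1) μ := by
  refine .of_bound (hu.div (hR.max measurable_const)).aestronglyMeasurable C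
    (ae_of_all _ fun ω => ?_)
  rw [Real.norm_eq_abs, abs_div, abs_of_pos (one_pos.trans_le (le_max_right (R ω) 1))]
  exact (div_le_self (abs_nonneg _) (le_max_right _ _)).trans (huC ω)

section Predictable

variable {Ω : Type*} {P alpha lam : ℕ → Ω → ℝ} {f g : ℕ → Hist → ℝ}

theorem exists_abs_comp_history_le
    (hpreda : ∀ t ω, alpha t ω = f t (history P alpha lam t ω))
    (hpredl : ∀ t ω, lam t ω = g t (history P alpha lam t ω)) (F : Hist → ℝ) (s : ℕ) :
    ∃ C, ∀ ω, |F (history P alpha lam s ω)| ≤ C := by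
  obtain ⟨C, hC⟩ := runHistory.exists_abs_le f g F s
  exact ⟨C, fun ω => runHistory.eq_history f g hpreda hpredl s ω ▸ hC _⟩

variable [MeasurableSpace Ω]

theorem measurable_comp_history (hP : ∀ i, Measurable (P i))
    (hpreda : ∀ t ω, alpha t ω = f t (history P alpha lam t ω))
    (hpredl : ∀ t ω, lam t ω = g t (history P alpha lam t ω)) {β : Type*} [MeasurableSpace β]
    (F : Hist → β) (s : ℕ) : Measurable fun ω => F (history P alpha lam s ω) := by
  simpa only [runHistory.eq_history f g hpreda hpredl] using
    runHistory.measurable_comp f g hP F s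

theorem measurable_alpha (hP : ∀ i, Measurable (P i))
    (hpreda : ∀ t ω, alpha t ω = f t (history P alpha lam t ω))
    (hpredl : ∀ t ω, lam t ω = g t (history P alpha lam t ω)) (j : ℕ) : Measurable (alpha j) := by
  simpa only [← hpreda] using measurable_comp_history hP hpreda hpredl (f j) j

theorem measurable_lam (hP : ∀ i, Measurable (P i))
    (hpreda : ∀ t ω, alpha t ω = f t (history P alpha lam t ω))
    (hpredl : ∀ t ω, lam t ω = g t (history P alpha lam t ω)) (j : ℕ) : Measurable (lam j) := by
  simpa only [← hpredl] using measurable_comp_history hP hpreda hpredl (g j) j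

theorem measurable_numRejections (hP : ∀ i, Measurable (P i))
    (hpreda : ∀ t ω, alpha t ω = f t (history P alpha lam t ω))
    (hpredl : ∀ t ω, lam t ω = g t (history P alpha lam t ω)) (t : ℕ) :
    Measurable (numRejections P alpha t) := by
  simpa only [← numRejections_eq_rejCount_history] using
    measurable_comp_history hP hpreda hpredl (rejCount t) (t + 1)

theorem integrable_saffron_term {μ : Measure Ω} [IsFiniteMeasure μ]
    (hP : ∀ i, Measurable (P i))
    (hpreda : ∀ t ω, alpha t ω = f t (history P alpha lam t ω))
    (hpredl : ∀ t ω, lam t ω = g t (history P alpha lam t ω)) (j t : ℕ) :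
    Integrable (fun ω => alpha j ω * (if lam j ω < P j ω then 1 else 0) / (1 - lam j ω)
      / max (numRejections P alpha t ω) 1) μ := by
  have hlm := measurable_lam hP hpreda hpredl j
  obtain ⟨C, hC⟩ := exists_abs_comp_history_le hpreda hpredl (fun b => f j b / (1 - g j b)) j
  refine integrable_div_max_one (((measurable_alpha hP hpreda hpredl j).mul
    (Measurable.ite (measurableSet_lt hlm (hP j)) measurable_const measurable_const)).div
    (measurable_const.sub hlm)) (measurable_numRejections hP hpreda hpredl t) (C := C)
    fun ω => ?_
  have hCω : |alpha j ω / (1 - lam j ω)| ≤ C := by simpa only [← hpreda, ← hpredl] using hC ω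
  split_ifs
  · simpa using hCω
  · simpa using (abs_nonneg _).trans hCω

end Predictable


theorem integral_ite_div_le_integral_saffron_of_update {Ω : Type*} [m0 : MeasurableSpace Ω]
    {μ : Measure Ω} [IsProbabilityMeasure μ] {P alpha lam : ℕ → Ω → ℝ} {H0 : Set ℕ}
    (hPmeas : ∀ j, Measurable (P j)) (ha0 : ∀ j ω, 0 ≤ alpha j ω)
    (hl : ∀ j ω, lam j ω ∈ Set.Ico (0 : ℝ) 1) (halam : ∀ j ω, alpha j ω ≤ lam j ω)
    (hindep : nullsIndep μ H0 P) {f g : ℕ → Hist → ℝ}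
    (hpreda : ∀ t ω, alpha t ω = f t (history P alpha lam t ω))
    (hpredl : ∀ t ω, lam t ω = g t (history P alpha lam t ω))
    {j : ℕ} (hj : j ∈ H0) (hsu : IsSuperUniform μ (P j)) (c : ℝ) (t : ℕ) :
    ∫ ω, (if P j ω ≤ alpha j ω then 1 else 0)
        / max (rejCount t (runHistory f g (t + 1) (Function.update (P · ω) j c))) 1 ∂μ
      ≤ ∫ ω, alpha j ω * (if lam j ω < P j ω then 1 else 0) / (1 - lam j ω)
        / max (rejCount t (runHistory f g (t + 1) (Function.update (P · ω) j c))) 1 ∂μ := by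
  have hrj : ∀ ω, runHistory f g j (Function.update (P · ω) j c) = history P alpha lam j ω :=
    fun ω => (runHistory.update_of_le f g le_rfl _ c).trans
      (runHistory.eq_history f g hpreda hpredl j ω)
  have haj : ∀ ω, f j (runHistory f g j (Function.update (P · ω) j c)) = alpha j ω :=
    fun ω => by rw [hrj, hpreda]
  have hlj : ∀ ω, g j (runHistory f g j (Function.update (P · ω) j c)) = lam j ω :=
    fun ω => by rw [hrj, hpredl]
  have hmOther : (⨆ i, ⨆ (_ : i ≠ j), MeasurableSpace.comap (P i) inferInstance) ≤ m0 :=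
    iSup₂_le fun i _ => (hPmeas i).comap_le
  have hr := measurable_update_apply_iSup_ne P j c
  -- the data besides `P j` that the terms depend on, as a finitely-valued random variable
  let D (ω : Ω) : ((Fin j → Bool) × (Fin j → Bool)) ×
      ((Fin (t + 1) → Bool) × (Fin (t + 1) → Bool)) :=
    (restrictHist j (runHistory f g j (Function.update (P · ω) j c)),
      restrictHist (t + 1) (runHistory f g (t + 1) (Function.update (P · ω) j c)))
  have hDm : Measurable[⨆ i, ⨆ (_ : i ≠ j), MeasurableSpace.comap (P i) inferInstance] D :=
    (runHistory.measurable_restrictHist f g hr j).prodMk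
      (runHistory.measurable_restrictHist f g hr (t + 1))
  have hXD : IndepFun (P j) D μ :=
    indep_of_indep_of_le_right (hindep.indep_iSup_ne hPmeas hj) hDm.comap_le
  simpa only [D, runHistory.extendHist_restrictHist, haj, hlj] using
    hsu.integral_le_integral_saffron (hPmeas j) (hDm.mono hmOther le_rfl) hXD
      (a := fun v => f j (extendHist j v.1)) (l := fun v => g j (extendHist j v.1))
      (n := fun v => max (rejCount t (extendHist (t + 1) v.2)) 1)
      (fun ω => by
        simp only [D, runHistory.extendHist_restrictHist, haj]
        exact ⟨ha0 j ω, (halam j ω).trans (hl j ω).2.le⟩)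
      (fun ω => by simpa only [D, runHistory.extendHist_restrictHist, hlj] using hl j ω)
      (fun _ => zero_le_one.trans (le_max_right _ _))

theorem integral_ite_div_le_integral_saffron {Ω : Type*} [MeasurableSpace Ω]
    {μ : Measure Ω} [IsProbabilityMeasure μ] {P alpha lam : ℕ → Ω → ℝ} {H0 : Set ℕ}
    (hPmeas : ∀ j, Measurable (P j)) (hP1 : ∀ j ω, P j ω ≤ 1) (ha0 : ∀ j ω, 0 ≤ alpha j ω)
    (hl : ∀ j ω, lam j ω ∈ Set.Ico (0 : ℝ) 1) (halam : ∀ j ω, alpha j ω ≤ lam j ω)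
    (hindep : nullsIndep μ H0 P) {f g : ℕ → Hist → ℝ}
    (hpreda : ∀ t ω, alpha t ω = f t (history P alpha lam t ω))
    (hpredl : ∀ t ω, lam t ω = g t (history P alpha lam t ω))
    (hfmono : ∀ t, Monotone (f t)) (hgmono : ∀ t, Monotone (g t))
    {j : ℕ} (hj : j ∈ H0) (hsu : IsSuperUniform μ (P j)) (t : ℕ) :
    ∫ ω, (if P j ω ≤ alpha j ω then 1 else 0) / max (numRejections P alpha t ω) 1 ∂μ
      ≤ ∫ ω, alpha j ω * (if lam j ω < P j ω then 1 else 0) / (1 - lam j ω)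
          / max (numRejections P alpha t ω) 1 ∂μ := by
  have hrun := runHistory.eq_history f g hpreda hpredl
  have hR : ∀ ω, numRejections P alpha t ω = rejCount t (runHistory f g (t + 1) (P · ω)) :=
    fun ω => by rw [hrun, numRejections_eq_rejCount_history]
  have hle : ∀ ω, rejCount t (runHistory f g (t + 1) (Function.update (P · ω) j 1))
      ≤ numRejections P alpha t ω := fun ω =>
    hR ω ▸ rejCount_mono t (runHistory.update_le f g hfmono hgmono (hP1 j ω) _)
  have heq : ∀ ω, lam j ω < P j ω →
      rejCount t (runHistory f g (t + 1) (Function.update (P · ω) j 1))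
        = numRejections P alpha t ω := by
    intro ω hω
    have hl1 := (hl j ω).2
    rw [hR, runHistory.update_eq f g] <;> simp only [hrun, ← hpreda, ← hpredl] <;>
      constructor <;> intro h <;> linarith [halam j ω]
  have hint : Integrable (fun ω => (if P j ω ≤ alpha j ω then 1 else 0)
      / max (rejCount t (runHistory f g (t + 1) (Function.update (P · ω) j 1))) 1) μ :=
    integrable_div_max_one (Measurable.ite
      (measurableSet_le (hPmeas j) (measurable_alpha hPmeas hpreda hpredl j))
      measurable_const measurable_const) (runHistory.measurable_comp f g
        (fun i => (measurable_update_apply_iSup_ne P j 1 i).mono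
          (iSup₂_le fun i _ => (hPmeas i).comap_le) le_rfl) _ _)
      (C := 1) fun ω => by split_ifs <;> simp
  calc _ ≤ ∫ ω, (if P j ω ≤ alpha j ω then 1 else 0)
          / max (rejCount t (runHistory f g (t + 1) (Function.update (P · ω) j 1))) 1 ∂μ :=
        integral_mono_of_nonneg (ae_of_all _ fun ω => by positivity) hint
          (ae_of_all _ fun ω => div_le_div_of_nonneg_left (by positivity) (by positivity)
            (max_le_max (hle ω) le_rfl))
    _ ≤ _ := integral_ite_div_le_integral_saffron_of_update hPmeas ha0 hl halam hindep
        hpreda hpredl hj hsu 1 t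
    _ = _ := by
        refine integral_congr_ae (ae_of_all _ fun ω => ?_)
        by_cases hω : lam j ω < P j ω
        · simp only [heq ω hω]
        · simp [hω]

theorem theorem1c_general {Ω : Type*} [m0 : MeasurableSpace Ω]
    (μ : Measure Ω) [IsProbabilityMeasure μ]
    (P alpha lam : ℕ → Ω → ℝ) (H0 : Set ℕ)
    (hPmeas : ∀ j, Measurable (P j)) (hP01 : ∀ j ω, P j ω ∈ Set.Icc (0 : ℝ) 1)
    (ha01 : ∀ j ω, alpha j ω ∈ Set.Ioo (0 : ℝ) 1)
    (hl01 : ∀ j ω, lam j ω ∈ Set.Ioo (0 : ℝ) 1)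
    (halam : ∀ j ω, alpha j ω ≤ lam j ω)
    -- independence of the nulls from each other and from the non-nulls
    (hindep : nullsIndep μ H0 P)
    -- marginal super-uniformity of each null p-value
    (hnull : ∀ j ∈ H0, ∀ u ∈ Set.Icc (0 : ℝ) 1, μ {ω | P j ω ≤ u} ≤ ENNReal.ofReal u)
    -- predictability and monotonicity of the level and threshold sequences
    (f g : ℕ → (ℕ → Bool) × (ℕ → Bool) → ℝ)
    (hpreda : ∀ t ω, alpha t ω = f t (history P alpha lam t ω))
    (hpredl : ∀ t ω, lam t ω = g t (history P alpha lam t ω))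
    (hfmono : ∀ t, Monotone (f t)) (hgmono : ∀ t, Monotone (g t))
    (t : ℕ) :
    ∫ ω, FDP H0 P alpha t ω ∂μ ≤ ∫ ω, FDPhatSaffron P alpha lam t ω ∂μ := by
  simp only [FDP, numFalseRejections, FDPhatSaffron, Finset.sum_div]
  rw [integral_finsetSum _ fun j _ => ?_,
    integral_finsetSum _ fun j _ => integrable_saffron_term hPmeas hpreda hpredl j t]
  · refine Finset.sum_le_sum fun j _ => ?_
    by_cases hj : j ∈ H0
    · simpa only [hj, true_and] using integral_ite_div_le_integral_saffron hPmeas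
        (fun j ω => (hP01 j ω).2) (fun j ω => (ha01 j ω).1.le)
        (fun j ω => Set.Ioo_subset_Ico_self (hl01 j ω)) halam hindep hpreda hpredl hfmono
        hgmono hj (hnull j hj) t
    · simp only [hj, false_and, if_false, zero_div, integral_zero]
      exact integral_nonneg fun ω => div_nonneg (div_nonneg (mul_nonneg (ha01 j ω).1.le
        (by split_ifs <;> norm_num)) (sub_nonneg.2 (hl01 j ω).2.le)) (by positivity)
  · exact integrable_div_max_one (Measurable.ite ((MeasurableSet.const _).inter
      (measurableSet_le (hPmeas j) (measurable_alpha hPmeas hpreda hpredl j)))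
      measurable_const measurable_const) (measurable_numRejections hPmeas hpreda hpredl t)
      (C := 1) fun ω => by split_ifs <;> simp

/-- Theorem 1(c): if the null p-values are independent of each other and of the non-nulls,
each null p-value is super-uniform, and both `{α_t}` and `{λ_t}` are monotone, then
`E[FDP̂_λ(t)] ≥ E[FDP(t)] = FDR(t)` for all `t`. -/
theorem theorem1c {Ω : Type*} [m0 : MeasurableSpace Ω]
    (μ : Measure Ω) [IsProbabilityMeasure μ]
    (P alpha lam : ℕ → Ω → ℝ) (H0 : Set ℕ)
    (hPmeas : ∀ j, Measurable (P j)) (hP01 : ∀ j ω, P j ω ∈ Set.Icc (0 : ℝ) 1)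
    (hameas : ∀ j, Measurable (alpha j)) (ha01 : ∀ j ω, alpha j ω ∈ Set.Ioo (0 : ℝ) 1)
    (hlmeas : ∀ j, Measurable (lam j)) (hl01 : ∀ j ω, lam j ω ∈ Set.Ioo (0 : ℝ) 1)
    (halam : ∀ j ω, alpha j ω ≤ lam j ω)
    -- independence of the nulls from each other and from the non-nulls
    (hindep : nullsIndep μ H0 P)
    -- marginal super-uniformity of each null p-value
    (hnull : ∀ j ∈ H0, ∀ u ∈ Set.Icc (0 : ℝ) 1, μ {ω | P j ω ≤ u} ≤ ENNReal.ofReal u)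
    -- predictability and monotonicity of the level and threshold sequences
    (f g : ℕ → (ℕ → Bool) × (ℕ → Bool) → ℝ)
    (hpreda : ∀ t ω, alpha t ω = f t (history P alpha lam t ω))
    (hpredl : ∀ t ω, lam t ω = g t (history P alpha lam t ω))
    (hfmono : ∀ t, Monotone (f t)) (hgmono : ∀ t, Monotone (g t))
    (t : ℕ) :
    ∫ ω, FDP H0 P alpha t ω ∂μ ≤ ∫ ω, FDPhatSaffron P alpha lam t ω ∂μ :=
  theorem1c_general (m0 := m0) μ P alpha lam H0 hPmeas hP01 ha01 hl01 halam hindep hnull f g hpreda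
    hpredl hfmono hgmono t
end

section
/- If the null p-values are independent of each other and of the non-null p-values, each null p-value is super-uniform (P(P_j ≤ u) ≤ u for all u ∈ [0,1]), both sequences {α_t} and {λ_t} are monotone, and FDP̂_λ(t) ≤ α almost surely for all t ∈ ℕ, then FDR(t) ≤ α for all t ∈ ℕ. (Theorem 1(d)) -/
open MeasureTheory ProbabilityTheory

/-!
Fix a null `j` and write `D(t) = max(|R(t)|, 1)`; let `D⁰(t)`, `D¹(t)` be the same quantity for the
procedure run with `P_j` replaced by `0` and by `1`. By predictability, `α_j`, `λ_j`, `D⁰(t)` and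
`D¹(t)` are functions of the other p-values, hence independent of `P_j`. On `{P_j ≤ α_j}` the
value `0` makes the same decisions as `P_j`, so `D(t) = D⁰(t)` there and super-uniformity gives
`E[1{P_j ≤ α_j} / D(t)] ≤ E[α_j / D⁰(t)]`. Monotonicity of the rules gives `D¹(t) ≤ D⁰(t)`.
On `{P_j > λ_j}` the value `1` makes the same decisions as `P_j`, and `P_j > λ_j` has conditional
probability at least `1 - λ_j`, so `E[α_j / D¹(t)] ≤ E[α_j 1{P_j > λ_j} / ((1 - λ_j) D(t))]`.
Summing over the nulls bounds the FDR by `E[FDP̂_λ(t)] ≤ α`.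
-/

section SuperUniform

open scoped ENNReal

variable {Ω : Type*} [MeasurableSpace Ω] {μ : Measure Ω}

theorem lintegral_comp_eq_lintegral_lintegral_of_indepFun [IsFiniteMeasure μ]
    {α β : Type*} [MeasurableSpace α] [MeasurableSpace β] {X : Ω → α} {V : Ω → β}
    (hXV : X ⟂ᵢ[μ] V) (hX : Measurable X) (hV : Measurable V) {h : α → β → ℝ≥0∞}
    (hh : Measurable (Function.uncurry h)) :
    ∫⁻ ω, h (X ω) (V ω) ∂μ = ∫⁻ ω, ∫⁻ x, h x (V ω) ∂μ.map X ∂μ := calc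
  _ = ∫⁻ p, Function.uncurry h p ∂μ.map fun ω => (X ω, V ω) :=
    (lintegral_map hh (hX.prodMk hV)).symm
  _ = ∫⁻ p, Function.uncurry h p ∂(μ.map X).prod (μ.map V) := by
    rw [(indepFun_iff_map_prod_eq_prod_map_map hX.aemeasurable hV.aemeasurable).1 hXV]
  _ = ∫⁻ v, ∫⁻ x, h x v ∂μ.map X ∂μ.map V := lintegral_prod_symm _ hh.aemeasurable
  _ = _ := lintegral_map hh.lintegral_prod_left' hV

def SuperUniform (μ : Measure Ω) (X : Ω → ℝ) : Prop :=
  ∀ u ∈ Set.Icc (0 : ℝ) 1, μ {ω | X ω ≤ u} ≤ ENNReal.ofReal u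

variable {X : Ω → ℝ}

theorem SuperUniform.lintegral_ite_mul_le [IsFiniteMeasure μ] (hsu : SuperUniform μ X)
    {B W : Ω → ℝ} (hX : Measurable X) (hB : Measurable B) (hW : Measurable W)
    (hind : X ⟂ᵢ[μ] fun ω => (B ω, W ω)) (hB01 : ∀ ω, B ω ∈ Set.Icc (0 : ℝ) 1) :
    ∫⁻ ω, ENNReal.ofReal ((if X ω ≤ B ω then 1 else 0) * W ω) ∂μ ≤
      ∫⁻ ω, ENNReal.ofReal (B ω * W ω) ∂μ := by
  rw [lintegral_comp_eq_lintegral_lintegral_of_indepFun hind hX (hB.prodMk hW)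
    (h := fun x v => ENNReal.ofReal ((if x ≤ v.1 then 1 else 0) * v.2))
    ((Measurable.ite (measurableSet_le measurable_fst measurable_snd.fst) measurable_const
      measurable_const).mul measurable_snd.snd).ennreal_ofReal]
  refine lintegral_mono fun ω => ?_
  have hpoint : ∀ x, ENNReal.ofReal ((if x ≤ B ω then 1 else 0) * W ω) =
      (Set.Iic (B ω)).indicator (fun _ => ENNReal.ofReal (W ω)) x := fun x => by
    by_cases hx : x ≤ B ω <;> simp [hx]
  simp only [hpoint]
  rw [lintegral_indicator_const measurableSet_Iic, Measure.map_apply hX measurableSet_Iic,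
    ENNReal.ofReal_mul (hB01 ω).1, mul_comm]
  gcongr
  exact hsu _ (hB01 ω)

theorem SuperUniform.lintegral_le_lintegral_ite_div_mul [IsProbabilityMeasure μ]
    (hsu : SuperUniform μ X) {L W : Ω → ℝ} (hX : Measurable X) (hL : Measurable L)
    (hW : Measurable W) (hind : X ⟂ᵢ[μ] fun ω => (L ω, W ω))
    (hL01 : ∀ ω, L ω ∈ Set.Ico (0 : ℝ) 1) :
    ∫⁻ ω, ENNReal.ofReal (W ω) ∂μ ≤
      ∫⁻ ω, ENNReal.ofReal ((if L ω < X ω then 1 else 0) / (1 - L ω) * W ω) ∂μ := by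
  rw [lintegral_comp_eq_lintegral_lintegral_of_indepFun hind hX (hL.prodMk hW)
    (h := fun x v => ENNReal.ofReal ((if v.1 < x then 1 else 0) / (1 - v.1) * v.2))
    (Measurable.ennreal_ofReal <| .mul (.div (Measurable.ite
      (measurableSet_lt measurable_snd.fst measurable_fst) measurable_const measurable_const)
        (measurable_const.sub measurable_snd.fst)) measurable_snd.snd)]
  refine lintegral_mono fun ω => ?_
  have hpos : 0 < 1 - L ω := by linarith [(hL01 ω).2]
  have hpoint : ∀ x, ENNReal.ofReal ((if L ω < x then 1 else 0) / (1 - L ω) * W ω) =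
      (Set.Ioi (L ω)).indicator (fun _ => ENNReal.ofReal ((1 - L ω)⁻¹ * W ω)) x := fun x => by
    by_cases hx : L ω < x <;> simp [hx]
  have htail : ENNReal.ofReal (1 - L ω) ≤ μ.map X (Set.Ioi (L ω)) := by
    rw [Measure.map_apply hX measurableSet_Ioi, ← Set.compl_Iic, Set.preimage_compl,
      prob_compl_eq_one_sub (hX measurableSet_Iic), ENNReal.ofReal_sub _ (hL01 ω).1,
      ENNReal.ofReal_one]
    gcongr
    exact hsu _ ⟨(hL01 ω).1, (hL01 ω).2.le⟩
  simp only [hpoint]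
  rw [lintegral_indicator_const measurableSet_Ioi]
  calc ENNReal.ofReal (W ω)
      = ENNReal.ofReal ((1 - L ω)⁻¹ * W ω) * ENNReal.ofReal (1 - L ω) := by
        rw [← ENNReal.ofReal_mul' hpos.le]
        field_simp
    _ ≤ _ := by gcongr

end SuperUniform

section NullIndependence

variable {Ω : Type*} {P : ℕ → Ω → ℝ}

abbrev sigmaExcept (P : ℕ → Ω → ℝ) (j : ℕ) : MeasurableSpace Ω :=
  ⨆ k ≠ j, MeasurableSpace.comap (P k) inferInstance

theorem measurable_sigmaExcept {j k : ℕ} (hk : k ≠ j) : Measurable[sigmaExcept P j] (P k) :=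
  Measurable.of_comap_le (le_iSup₂ (f := fun k (_ : k ≠ j) => MeasurableSpace.comap (P k) _) k hk)

variable [mΩ : MeasurableSpace Ω] {μ : Measure Ω}

theorem sigmaExcept_le (hP : ∀ k, Measurable (P k)) (j : ℕ) : sigmaExcept P j ≤ mΩ :=
  iSup₂_le fun k _ => (hP k).comap_le

theorem nullsIndep.indep_sigmaExcept {H0 : Set ℕ} (h : nullsIndep μ H0 P)
    (hP : ∀ k, Measurable (P k)) {j : ℕ} (hj : j ∈ H0) :
    Indep (MeasurableSpace.comap (P j) inferInstance) (sigmaExcept P j) μ := by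
  let m (i : Option {j : ℕ // j ∈ H0}) : MeasurableSpace Ω :=
    i.elim (⨆ k ∈ H0ᶜ, MeasurableSpace.comap (P k) inferInstance)
      (fun k => MeasurableSpace.comap (P k.1) inferInstance)
  have hm : ∀ i, m i ≤ mΩ
    | none => iSup₂_le fun k _ => (hP k).comap_le
    | some k => (hP k.1).comap_le
  have hsplit := indep_biSup_compl hm h {some ⟨j, hj⟩}
  rw [iSup_singleton] at hsplit
  refine indep_of_indep_of_le_right hsplit (iSup₂_le fun k hk => ?_)
  by_cases hkH : k ∈ H0
  · exact le_biSup m (i := some ⟨k, hkH⟩) (by simpa using hk)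
  · exact (le_biSup (fun k => MeasurableSpace.comap (P k) inferInstance) (hkH : k ∈ H0ᶜ)).trans
      (le_biSup m (i := none) (by simp))

end NullIndependence

section FDPDecomposition

variable {Ω : Type*}

theorem FDP_nonneg (H0 : Set ℕ) (P alpha : ℕ → Ω → ℝ) (t : ℕ) (ω : Ω) :
    0 ≤ FDP H0 P alpha t ω :=
  div_nonneg (Finset.sum_nonneg fun k _ => by split_ifs <;> norm_num)
    (le_max_of_le_right zero_le_one)

variable [MeasurableSpace Ω] {μ : Measure Ω}

theorem lintegral_ofReal_finset_sum {ι : Type*} (s : Finset ι) {F : ι → Ω → ℝ}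
    (hF : ∀ k ∈ s, Measurable (F k)) (hF0 : ∀ k ∈ s, ∀ ω, 0 ≤ F k ω) :
    ∫⁻ ω, ENNReal.ofReal (∑ k ∈ s, F k ω) ∂μ = ∑ k ∈ s, ∫⁻ ω, ENNReal.ofReal (F k ω) ∂μ := by
  rw [← lintegral_finsetSum _ fun k hk => (hF k hk).ennreal_ofReal]
  exact lintegral_congr fun ω => ENNReal.ofReal_sum_of_nonneg fun k hk => hF0 k hk ω

theorem measurable_numRejections_s7 {P alpha : ℕ → Ω → ℝ} (hP : ∀ k, Measurable (P k))
    (hα : ∀ k, Measurable (alpha k)) (t : ℕ) : Measurable (numRejections P alpha t) :=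
  Finset.measurable_sum _ fun k _ =>
    Measurable.ite (measurableSet_le (hP k) (hα k)) measurable_const measurable_const

theorem measurable_FDP {P alpha : ℕ → Ω → ℝ} (hP : ∀ k, Measurable (P k))
    (hα : ∀ k, Measurable (alpha k)) (H0 : Set ℕ) (t : ℕ) : Measurable (FDP H0 P alpha t) :=
  (Finset.measurable_sum _ fun k _ => Measurable.ite ((MeasurableSet.const _).inter
    (measurableSet_le (hP k) (hα k))) measurable_const measurable_const).div
      ((measurable_numRejections_s7 hP hα t).max measurable_const)

theorem lintegral_FDP_le_lintegral_FDPhatSaffron {P alpha lam : ℕ → Ω → ℝ} {H0 : Set ℕ}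
    (hP : ∀ k, Measurable (P k)) (hα : ∀ k, Measurable (alpha k)) (hl : ∀ k, Measurable (lam k))
    (hα0 : ∀ k ω, 0 ≤ alpha k ω) (hl1 : ∀ k ω, lam k ω < 1) (t : ℕ)
    (hnull : ∀ j ∈ H0,
      ∫⁻ ω, ENNReal.ofReal ((if P j ω ≤ alpha j ω then 1 else 0) /
          max (numRejections P alpha t ω) 1) ∂μ ≤
        ∫⁻ ω, ENNReal.ofReal (alpha j ω * (if lam j ω < P j ω then 1 else 0) / (1 - lam j ω) /
          max (numRejections P alpha t ω) 1) ∂μ) :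
    ∫⁻ ω, ENNReal.ofReal (FDP H0 P alpha t ω) ∂μ ≤
      ∫⁻ ω, ENNReal.ofReal (FDPhatSaffron P alpha lam t ω) ∂μ := by
  have hD : Measurable fun ω => max (numRejections P alpha t ω) 1 :=
    (measurable_numRejections_s7 hP hα t).max measurable_const
  have hD0 : ∀ ω, 0 ≤ max (numRejections P alpha t ω) 1 := fun ω => le_max_of_le_right zero_le_one
  simp only [FDP, FDPhatSaffron, numFalseRejections, Finset.sum_div]
  rw [lintegral_ofReal_finset_sum, lintegral_ofReal_finset_sum]
  · refine Finset.sum_le_sum fun k _ => ?_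
    by_cases hk : k ∈ H0
    · simpa [hk] using hnull k hk
    · simp [hk]
  · exact fun k _ => ((((hα k).mul (Measurable.ite (measurableSet_lt (hl k) (hP k))
      measurable_const measurable_const)).div (measurable_const.sub (hl k)))).div hD
  · exact fun k _ ω => div_nonneg (div_nonneg (mul_nonneg (hα0 k ω) (by split_ifs <;> norm_num))
      (sub_nonneg.2 (hl1 k ω).le)) (hD0 ω)
  · exact fun k _ => (Measurable.ite ((MeasurableSet.const _).inter
      (measurableSet_le (hP k) (hα k))) measurable_const measurable_const).div hD
  · exact fun k _ ω => div_nonneg (by split_ifs <;> norm_num) (hD0 ω)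

end FDPDecomposition

noncomputable section

namespace OnlineTesting

variable (f g : ℕ → (ℕ → Bool) × (ℕ → Bool) → ℝ)

/-- `(α_i, λ_i)` when the procedure with rules `f`, `g` is run on the p-values `q`. -/
def levels (q : ℕ → ℝ) (i : ℕ) : ℝ × ℝ :=
  let H : (ℕ → Bool) × (ℕ → Bool) :=
    (fun k => if k < i then decide (q k ≤ (levels q k).1) else false,
     fun k => if k < i then decide (q k ≤ (levels q k).2) else false)
  (f i H, g i H)
termination_by i

/-- The pair `(R_k, C_k)` of rejection and candidacy indicators. -/
def decisions (q : ℕ → ℝ) (k : ℕ) : Bool × Bool :=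
  (decide (q k ≤ (levels f g q k).1), decide (q k ≤ (levels f g q k).2))

def pastDecisions (q : ℕ → ℝ) (i : ℕ) : (ℕ → Bool) × (ℕ → Bool) :=
  (fun k => decide (k < i) && (decisions f g q k).1,
   fun k => decide (k < i) && (decisions f g q k).2)

def rejCount (q : ℕ → ℝ) (t : ℕ) : ℝ :=
  ∑ k ∈ Finset.Iic t, if (decisions f g q k).1 then 1 else 0

variable {f g}

theorem levels_eq (q : ℕ → ℝ) (i : ℕ) :
    levels f g q i = (f i (pastDecisions f g q i), g i (pastDecisions f g q i)) := by
  rw [levels]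
  congr <;> funext k <;> by_cases hk : k < i <;> simp [hk, decisions]

theorem levels_congr_decisions {q q' : ℕ → ℝ} {i : ℕ}
    (h : ∀ k < i, decisions f g q k = decisions f g q' k) :
    levels f g q i = levels f g q' i := by
  have : pastDecisions f g q i = pastDecisions f g q' i := by
    simp only [pastDecisions, Prod.mk.injEq]
    constructor <;> funext k <;> by_cases hk : k < i <;> simp [hk, h]
  rw [levels_eq, levels_eq, this]

theorem levels_congr {q q' : ℕ → ℝ} (i : ℕ) (h : ∀ k < i, q k = q' k) :
    levels f g q i = levels f g q' i := by
  induction i using Nat.strong_induction_on with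
  | _ i ih =>
    refine levels_congr_decisions fun k hk => ?_
    rw [decisions, decisions, h k hk, ih k hk fun m hm => h m (hm.trans hk)]

theorem levels_update_self (q : ℕ → ℝ) (j : ℕ) (x : ℝ) :
    levels f g (Function.update q j x) j = levels f g q j :=
  levels_congr j fun _ hk => Function.update_of_ne hk.ne _ _

theorem decisions_update {q : ℕ → ℝ} {j : ℕ} {x : ℝ}
    (hj : decisions f g (Function.update q j x) j = decisions f g q j) (k : ℕ) :
    decisions f g (Function.update q j x) k = decisions f g q k := by
  induction k using Nat.strong_induction_on with
  | _ k ih =>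
    by_cases hkj : k = j
    · exact hkj ▸ hj
    · rw [decisions, decisions, levels_congr_decisions ih, Function.update_of_ne hkj]

theorem rejCount_update {q : ℕ → ℝ} {j : ℕ} {x : ℝ}
    (hrej : x ≤ (levels f g q j).1 ↔ q j ≤ (levels f g q j).1)
    (hcand : x ≤ (levels f g q j).2 ↔ q j ≤ (levels f g q j).2) (t : ℕ) :
    rejCount f g (Function.update q j x) t = rejCount f g q t := by
  have hj : decisions f g (Function.update q j x) j = decisions f g q j := by
    simp only [decisions, levels_update_self, Function.update_self, hrej, hcand]
  simp only [rejCount, decisions_update hj]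

theorem decisions_le_decisions_of_levels_le {q q' : ℕ → ℝ} (hq : q' ≤ q) {k : ℕ}
    (h : levels f g q k ≤ levels f g q' k) : decisions f g q k ≤ decisions f g q' k :=
  ⟨Bool.le_iff_imp.2 fun hk => decide_eq_true ((hq k).trans ((of_decide_eq_true hk).trans h.1)),
   Bool.le_iff_imp.2 fun hk => decide_eq_true ((hq k).trans ((of_decide_eq_true hk).trans h.2))⟩

theorem levels_le_levels (hf : ∀ i, Monotone (f i)) (hg : ∀ i, Monotone (g i))
    {q q' : ℕ → ℝ} (hq : q' ≤ q) (i : ℕ) : levels f g q i ≤ levels f g q' i := by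
  induction i using Nat.strong_induction_on with
  | _ i ih =>
    have hH : pastDecisions f g q i ≤ pastDecisions f g q' i := by
      refine ⟨fun k => ?_, fun k => ?_⟩ <;> by_cases hk : k < i
      all_goals simp only [pastDecisions, hk, decide_true, decide_false, Bool.true_and,
        Bool.false_and, le_refl]
      exacts [(decisions_le_decisions_of_levels_le hq (ih k hk)).1,
        (decisions_le_decisions_of_levels_le hq (ih k hk)).2]
    rw [levels_eq, levels_eq]
    exact ⟨hf i hH, hg i hH⟩

theorem rejCount_le_rejCount (hf : ∀ i, Monotone (f i)) (hg : ∀ i, Monotone (g i))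
    {q q' : ℕ → ℝ} (hq : q' ≤ q) (t : ℕ) : rejCount f g q t ≤ rejCount f g q' t := by
  refine Finset.sum_le_sum fun k _ => ?_
  have := (decisions_le_decisions_of_levels_le hq (levels_le_levels hf hg hq k)).1
  revert this
  cases (decisions f g q k).1 <;> cases (decisions f g q' k).1 <;> simp

section Measurability

variable {Ω : Type*} {m : MeasurableSpace Ω} {Q : ℕ → Ω → ℝ}

theorem measurable_decisions_of_measurable_levels {k : ℕ} (hQ : Measurable (Q k))
    (hk : Measurable fun ω => levels f g (fun k => Q k ω) k) :
    Measurable fun ω => decisions f g (fun k => Q k ω) k :=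
  (measurable_to_bool <| by simpa [Set.preimage] using measurableSet_le hQ hk.fst).prodMk
    (measurable_to_bool <| by simpa [Set.preimage] using measurableSet_le hQ hk.snd)

theorem measurable_levels (hQ : ∀ k, Measurable (Q k)) (i : ℕ) :
    Measurable fun ω => levels f g (fun k => Q k ω) i := by
  induction i using Nat.strong_induction_on with
  | _ i ih =>
    -- the history before `i` takes finitely many values, so any `f i`, `g i` are measurable on it
    let extend (v : Fin i → Bool × Bool) : (ℕ → Bool) × (ℕ → Bool) :=
      (fun k => if hk : k < i then (v ⟨k, hk⟩).1 else false,
       fun k => if hk : k < i then (v ⟨k, hk⟩).2 else false)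
    have hD : Measurable fun ω (k : Fin i) => decisions f g (fun k => Q k ω) k :=
      measurable_pi_lambda _ fun k => measurable_decisions_of_measurable_levels (hQ k) (ih k k.2)
    have hF : Measurable fun v => (f i (extend v), g i (extend v)) := .of_discrete
    have hhist : ∀ ω, pastDecisions f g (fun k => Q k ω) i =
        extend fun k : Fin i => decisions f g (fun k => Q k ω) k := fun ω => by
      ext k <;> by_cases hk : k < i <;> simp [pastDecisions, extend, hk]
    simp only [levels_eq, hhist]
    exact hF.comp hD

theorem measurable_decisions (hQ : ∀ k, Measurable (Q k)) (k : ℕ) :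
    Measurable fun ω => decisions f g (fun k => Q k ω) k :=
  measurable_decisions_of_measurable_levels (hQ k) (measurable_levels hQ k)

theorem measurable_rejCount (hQ : ∀ k, Measurable (Q k)) (t : ℕ) :
    Measurable fun ω => rejCount f g (fun k => Q k ω) t :=
  Finset.measurable_sum _ fun k _ =>
    Measurable.ite (measurableSet_eq_fun (measurable_decisions hQ k).fst measurable_const)
      measurable_const measurable_const

end Measurability

section FDR

variable {Ω : Type*} {P alpha lam : ℕ → Ω → ℝ}

theorem levels_eq_of_predictable
    (hpreda : ∀ t ω, alpha t ω = f t (history P alpha lam t ω))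
    (hpredl : ∀ t ω, lam t ω = g t (history P alpha lam t ω)) (i : ℕ) (ω : Ω) :
    levels f g (fun k => P k ω) i = (alpha i ω, lam i ω) := by
  induction i using Nat.strong_induction_on with
  | _ i ih =>
    have : history P alpha lam i ω = pastDecisions f g (fun k => P k ω) i := by
      ext k <;> by_cases hk : k < i <;> simp [history, pastDecisions, decisions, hk] <;>
        simp [ih k hk]
    rw [levels_eq, hpreda, hpredl, this]

theorem numRejections_eq_rejCount
    (hlevels : ∀ i ω, levels f g (fun k => P k ω) i = (alpha i ω, lam i ω)) (t : ℕ) (ω : Ω) :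
    numRejections P alpha t ω = rejCount f g (fun k => P k ω) t := by
  simp [numRejections, rejCount, decisions, hlevels]

variable [mΩ : MeasurableSpace Ω] {μ : Measure Ω}

theorem lintegral_rejection_div_le [IsProbabilityMeasure μ]
    (hf : ∀ i, Monotone (f i)) (hg : ∀ i, Monotone (g i)) (hP : ∀ k, Measurable (P k))
    (hlevels : ∀ i ω, levels f g (fun k => P k ω) i = (alpha i ω, lam i ω))
    {j : ℕ} (hsu : SuperUniform μ (P j))
    (hind : Indep (MeasurableSpace.comap (P j) inferInstance) (sigmaExcept P j) μ)
    (ha : ∀ ω, alpha j ω ∈ Set.Icc (0 : ℝ) 1) (hl : ∀ ω, lam j ω ∈ Set.Ico (0 : ℝ) 1)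
    (hal : ∀ ω, alpha j ω ≤ lam j ω) (t : ℕ) :
    ∫⁻ ω, ENNReal.ofReal ((if P j ω ≤ alpha j ω then 1 else 0) /
        max (numRejections P alpha t ω) 1) ∂μ ≤
      ∫⁻ ω, ENNReal.ofReal (alpha j ω * (if lam j ω < P j ω then 1 else 0) / (1 - lam j ω) /
        max (numRejections P alpha t ω) 1) ∂μ := by
  have hindep : ∀ V : Ω → ℝ × ℝ, Measurable[sigmaExcept P j] V → P j ⟂ᵢ[μ] V := fun V hV =>
    (IndepFun_iff_Indep _ _ _).2 (indep_of_indep_of_le_right hind hV.comap_le)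
  -- the p-values with `P j` replaced by the constant `x`: a function of the other p-values
  let Q (x : ℝ) (ω : Ω) : ℕ → ℝ := Function.update (fun k => P k ω) j x
  have hQ : ∀ x k, Measurable[sigmaExcept P j] fun ω => Q x ω k := fun x k => by
    by_cases hk : k = j
    · simp [Q, hk]
    · simpa [Q, hk] using measurable_sigmaExcept hk
  have hQj : ∀ x ω, levels f g (Q x ω) j = (alpha j ω, lam j ω) := fun x ω => by
    simp [Q, levels_update_self, hlevels]
  have hαm : Measurable[sigmaExcept P j] (alpha j) := by
    simpa [hQj] using (measurable_levels (f := f) (g := g) (hQ 0) j).fst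
  have hlm : Measurable[sigmaExcept P j] (lam j) := by
    simpa [hQj] using (measurable_levels (f := f) (g := g) (hQ 0) j).snd
  let W (x : ℝ) (ω : Ω) : ℝ := (max (rejCount f g (Q x ω) t) 1)⁻¹
  have hW : ∀ x, Measurable[sigmaExcept P j] (W x) := fun x =>
    ((measurable_rejCount (hQ x) t).max measurable_const).inv
  have hle := sigmaExcept_le hP j
  have hrej := numRejections_eq_rejCount hlevels t
  have hW01 : ∀ ω, W 0 ω ≤ W 1 ω := fun ω =>
    inv_anti₀ (by positivity) (max_le_max_right 1 (rejCount_le_rejCount hf hg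
      (update_le_update_iff'.2 zero_le_one) t))
  -- `0` is rejected and `1` is not a candidate, so on these events the substitution changes
  -- no decision
  have hW0 : ∀ ω, P j ω ≤ alpha j ω → W 0 ω = (max (numRejections P alpha t ω) 1)⁻¹ :=
    fun ω h => by
      rw [hrej, ← rejCount_update (q := fun k => P k ω) (j := j) (x := 0)
        (by rw [hlevels]; exact iff_of_true (ha ω).1 h)
        (by rw [hlevels]; exact iff_of_true (hl ω).1 (h.trans (hal ω))) t]
  have hW1 : ∀ ω, lam j ω < P j ω → W 1 ω = (max (numRejections P alpha t ω) 1)⁻¹ :=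
    fun ω h => by
      have hα1 : alpha j ω < 1 := (hal ω).trans_lt (hl ω).2
      rw [hrej, ← rejCount_update (q := fun k => P k ω) (j := j) (x := 1)
        (by rw [hlevels]; exact iff_of_false hα1.not_ge ((hal ω).trans_lt h).not_ge)
        (by rw [hlevels]; exact iff_of_false (hl ω).2.not_ge h.not_ge) t]
  calc ∫⁻ ω, ENNReal.ofReal ((if P j ω ≤ alpha j ω then 1 else 0) /
          max (numRejections P alpha t ω) 1) ∂μ
      = ∫⁻ ω, ENNReal.ofReal ((if P j ω ≤ alpha j ω then 1 else 0) * W 0 ω) ∂μ :=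
        lintegral_congr fun ω => by
          split_ifs with h
          · rw [hW0 ω h, div_eq_mul_inv]
          · simp
    _ ≤ ∫⁻ ω, ENNReal.ofReal (alpha j ω * W 0 ω) ∂μ :=
        hsu.lintegral_ite_mul_le (hP j) (hαm.mono hle le_rfl) ((hW 0).mono hle le_rfl)
          (hindep _ (hαm.prodMk (hW 0))) ha
    _ ≤ ∫⁻ ω, ENNReal.ofReal (alpha j ω * W 1 ω) ∂μ :=
        lintegral_mono fun ω => ENNReal.ofReal_le_ofReal
          (mul_le_mul_of_nonneg_left (hW01 ω) (ha ω).1)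
    _ ≤ ∫⁻ ω, ENNReal.ofReal
          ((if lam j ω < P j ω then 1 else 0) / (1 - lam j ω) * (alpha j ω * W 1 ω)) ∂μ :=
        hsu.lintegral_le_lintegral_ite_div_mul (hP j) (hlm.mono hle le_rfl)
          ((hαm.mul (hW 1)).mono hle le_rfl) (hindep _ (hlm.prodMk (hαm.mul (hW 1)))) hl
    _ = _ := lintegral_congr fun ω => by
          split_ifs with h
          · rw [hW1 ω h]
            ring_nf
          · simp

end FDR

end OnlineTesting

end

theorem theorem1d_general {Ω : Type*} [m0 : MeasurableSpace Ω]
    (μ : Measure Ω) [IsProbabilityMeasure μ]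
    (P alpha lam : ℕ → Ω → ℝ) (H0 : Set ℕ)
    (hPmeas : ∀ j, Measurable (P j))
    (hameas : ∀ j, Measurable (alpha j)) (ha01 : ∀ j ω, alpha j ω ∈ Set.Ioo (0 : ℝ) 1)
    (hlmeas : ∀ j, Measurable (lam j)) (hl01 : ∀ j ω, lam j ω ∈ Set.Ioo (0 : ℝ) 1)
    (halam : ∀ j ω, alpha j ω ≤ lam j ω)
    -- independence of the nulls from each other and from the non-nulls
    (hindep : nullsIndep μ H0 P)
    -- marginal super-uniformity of each null p-value
    (hnull : ∀ j ∈ H0, ∀ u ∈ Set.Icc (0 : ℝ) 1, μ {ω | P j ω ≤ u} ≤ ENNReal.ofReal u)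
    -- predictability and monotonicity of the level and threshold sequences
    (f g : ℕ → (ℕ → Bool) × (ℕ → Bool) → ℝ)
    (hpreda : ∀ t ω, alpha t ω = f t (history P alpha lam t ω))
    (hpredl : ∀ t ω, lam t ω = g t (history P alpha lam t ω))
    (hfmono : ∀ t, Monotone (f t)) (hgmono : ∀ t, Monotone (g t))
    -- target level and almost-sure control of the SAFFRON FDP estimate
    (q : ℝ) (hq : q ∈ Set.Ioo (0 : ℝ) 1)
    (hFDPhat : ∀ t : ℕ, ∀ᵐ ω ∂μ, FDPhatSaffron P alpha lam t ω ≤ q)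
    (t : ℕ) :
    ∫ ω, FDP H0 P alpha t ω ∂μ ≤ q := by
  have hlevels := OnlineTesting.levels_eq_of_predictable hpreda hpredl
  rw [integral_eq_lintegral_of_nonneg_ae (ae_of_all _ fun ω => FDP_nonneg H0 P alpha t ω)
    (measurable_FDP hPmeas hameas H0 t).aestronglyMeasurable]
  refine ENNReal.toReal_le_of_le_ofReal hq.1.le ?_
  calc ∫⁻ ω, ENNReal.ofReal (FDP H0 P alpha t ω) ∂μ
      ≤ ∫⁻ ω, ENNReal.ofReal (FDPhatSaffron P alpha lam t ω) ∂μ :=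
        lintegral_FDP_le_lintegral_FDPhatSaffron hPmeas hameas hlmeas (fun k ω => (ha01 k ω).1.le)
          (fun k ω => (hl01 k ω).2) t fun j hj =>
            OnlineTesting.lintegral_rejection_div_le hfmono hgmono hPmeas hlevels (hnull j hj)
              (hindep.indep_sigmaExcept hPmeas hj) (fun ω => Set.Ioo_subset_Icc_self (ha01 j ω))
              (fun ω => Set.Ioo_subset_Ico_self (hl01 j ω)) (halam j) t
    _ ≤ ∫⁻ _, ENNReal.ofReal q ∂μ :=
        lintegral_mono_ae ((hFDPhat t).mono fun ω h => ENNReal.ofReal_le_ofReal h)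
    _ = ENNReal.ofReal q := by simp

/-- Theorem 1(d): if the null p-values are independent of each other and of the non-nulls,
each null p-value is super-uniform, both `{α_t}` and `{λ_t}` are monotone, and
`FDP̂_λ(t) ≤ α` almost surely for all `t`, then `FDR(t) ≤ α` for all `t`. -/
theorem theorem1d {Ω : Type*} [m0 : MeasurableSpace Ω]
    (μ : Measure Ω) [IsProbabilityMeasure μ]
    (P alpha lam : ℕ → Ω → ℝ) (H0 : Set ℕ)
    (hPmeas : ∀ j, Measurable (P j)) (hP01 : ∀ j ω, P j ω ∈ Set.Icc (0 : ℝ) 1)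
    (hameas : ∀ j, Measurable (alpha j)) (ha01 : ∀ j ω, alpha j ω ∈ Set.Ioo (0 : ℝ) 1)
    (hlmeas : ∀ j, Measurable (lam j)) (hl01 : ∀ j ω, lam j ω ∈ Set.Ioo (0 : ℝ) 1)
    (halam : ∀ j ω, alpha j ω ≤ lam j ω)
    -- independence of the nulls from each other and from the non-nulls
    (hindep : nullsIndep μ H0 P)
    -- marginal super-uniformity of each null p-value
    (hnull : ∀ j ∈ H0, ∀ u ∈ Set.Icc (0 : ℝ) 1, μ {ω | P j ω ≤ u} ≤ ENNReal.ofReal u)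
    -- predictability and monotonicity of the level and threshold sequences
    (f g : ℕ → (ℕ → Bool) × (ℕ → Bool) → ℝ)
    (hpreda : ∀ t ω, alpha t ω = f t (history P alpha lam t ω))
    (hpredl : ∀ t ω, lam t ω = g t (history P alpha lam t ω))
    (hfmono : ∀ t, Monotone (f t)) (hgmono : ∀ t, Monotone (g t))
    -- target level and almost-sure control of the SAFFRON FDP estimate
    (q : ℝ) (hq : q ∈ Set.Ioo (0 : ℝ) 1)
    (hFDPhat : ∀ t : ℕ, ∀ᵐ ω ∂μ, FDPhatSaffron P alpha lam t ω ≤ q)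
    (t : ℕ) :
    ∫ ω, FDP H0 P alpha t ω ∂μ ≤ q :=
  theorem1d_general (m0 := m0) μ P alpha lam H0 hPmeas hameas ha01 hlmeas hl01 halam hindep hnull f
    g hpreda hpredl hfmono hgmono q hq hFDPhat t
end
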